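/- arXiv:2006.11279 — 2 statements merged into one kernel-verified Lean document; each statement's English description precedes it below -/
import Mathlib

section
/- Dual value identity for the best case: Let s₁, …, s_N ∈ ℝⁿ with sample mean s̄ and empirical covariance Σ, let φ ∈ ℝⁿ with φ ≠ 0, δ > 0, and let α ∈ ℝ satisfy C² ≤ δ·‖φ‖₂² where C := α − φ·s̄. For λ₁ ≥ 0 and λ₂ ∈ ℝ define Φ_{λ₁,λ₂}(r) = sup_{u ∈ ℝⁿ} [ −(φ·u)² − λ₁·‖u − r‖₂² − λ₂·(φ·u) ]. Then inf_{λ₁ ≥ 0, λ₂ ∈ ℝ} [ λ₁δ + λ₂α + (1/N)·Σ_{i=1}^N Φ_{λ₁,λ₂}(s_i) ] = −α² − max(√(φᵀΣφ) − √(δ·‖φ‖₂² − C²), 0)². -/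
/-!
Put `λ₁ = m‖φ‖²`. Cauchy–Schwarz, with equality along the direction `φ`, reduces `Φ` to a
concave quadratic in the single variable `t = φ·u`, whence
`Φ(r) = (2m φ·r - λ₂)² / (4(1+m)) - m (φ·r)²`. Averaging over the sample, the dual objective
becomes `-α² + (m D - m V/(1+m))`, with `D = δ‖φ‖² - C²`, plus a square in `λ₂` vanishing at
an explicit `λ₂`; it remains to minimise `m D - m V/(1+m)` over `m ≥ 0`.
Its infimum is `0` (at `m = 0`) when `√V ≤ √D`, `-(√V - √D)²` (at `m = √V/√D - 1`) when
`0 < √D ≤ √V`, and `-V` (approached as `m → ∞`) when `D = 0`.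
-/

open scoped BigOperators

/-- Euclidean dot product on `Fin n → ℝ`. -/
noncomputable def eDot {n : ℕ} (a b : Fin n → ℝ) : ℝ := ∑ i, a i * b i

open Finset Set

lemma isGreatest_range_neg_sq_sub_penalty {m : ℝ} (hm : 0 ≤ m) (t₀ l₂ : ℝ) :
    IsGreatest (range fun t => -t ^ 2 - m * (t - t₀) ^ 2 - l₂ * t)
      ((2 * m * t₀ - l₂) ^ 2 / (4 * (1 + m)) - m * t₀ ^ 2) := by
  have h1m : 0 < 1 + m := by linarith
  have gap : ∀ t, ((2 * m * t₀ - l₂) ^ 2 / (4 * (1 + m)) - m * t₀ ^ 2)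
      - (-t ^ 2 - m * (t - t₀) ^ 2 - l₂ * t)
      = (2 * (1 + m) * t - 2 * m * t₀ + l₂) ^ 2 / (4 * (1 + m)) := by
    intro t
    field_simp
    ring
  refine ⟨⟨(2 * m * t₀ - l₂) / (2 * (1 + m)), ?_⟩, ?_⟩
  · have := gap ((2 * m * t₀ - l₂) / (2 * (1 + m)))
    field_simp at this ⊢
    linarith
  · rintro _ ⟨t, rfl⟩
    have := gap t
    have : 0 ≤ (2 * (1 + m) * t - 2 * m * t₀ + l₂) ^ 2 / (4 * (1 + m)) := by positivity
    linarith

section EDot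

variable {n : ℕ}

lemma sq_eDot_sub_le (φ u r : Fin n → ℝ) :
    (eDot φ u - eDot φ r) ^ 2 ≤ (∑ i, φ i ^ 2) * ∑ i, (u i - r i) ^ 2 := by
  have : eDot φ u - eDot φ r = ∑ i, φ i * (u i - r i) := by
    simp only [eDot, mul_sub, sum_sub_distrib]
  rw [this]
  exact sum_mul_sq_le_sq_mul_sq _ _ _

lemma eDot_add_mul_self (φ r : Fin n → ℝ) (c : ℝ) :
    eDot φ (fun i => r i + c * φ i) = eDot φ r + c * ∑ i, φ i ^ 2 := by
  simp only [eDot, mul_add, sum_add_distrib, mul_sum]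
  congr 1
  exact sum_congr rfl fun i _ => by ring

lemma eDot_const_mul_sum {N : ℕ} (φ : Fin n → ℝ) (c : ℝ) (s : Fin N → Fin n → ℝ) :
    eDot φ (fun j => c * ∑ i, s i j) = c * ∑ i, eDot φ (s i) := by
  simp only [eDot, mul_sum]
  rw [sum_comm]
  exact sum_congr rfl fun i _ => sum_congr rfl fun j _ => by ring

lemma isGreatest_neg_sq_eDot_sub_penalty (φ : Fin n → ℝ) (hφ : 0 < ∑ i, φ i ^ 2)
    {m : ℝ} (hm : 0 ≤ m) (l₂ : ℝ) (r : Fin n → ℝ) :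
    IsGreatest { y | ∃ u : Fin n → ℝ, y = -(eDot φ u) ^ 2
        - (m * ∑ i, φ i ^ 2) * (∑ i, (u i - r i) ^ 2) - l₂ * eDot φ u }
      ((2 * m * eDot φ r - l₂) ^ 2 / (4 * (1 + m)) - m * eDot φ r ^ 2) := by
  set nsq := ∑ i, φ i ^ 2
  obtain ⟨⟨t, ht⟩, hle⟩ := isGreatest_range_neg_sq_sub_penalty hm (eDot φ r) l₂
  refine ⟨⟨fun i => r i + (t - eDot φ r) / nsq * φ i, ?_⟩, ?_⟩
  · have hdist : ∑ i, (r i + (t - eDot φ r) / nsq * φ i - r i) ^ 2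
        = (t - eDot φ r) ^ 2 / nsq := by
      simp only [add_sub_cancel_left, mul_pow, ← mul_sum]
      field_simp
      rfl
    rw [eDot_add_mul_self, hdist, ← ht]
    field_simp
    ring
  · rintro _ ⟨u, rfl⟩
    have hcs := mul_le_mul_of_nonneg_left (sq_eDot_sub_le φ u r) hm
    have := hle ⟨eDot φ u, rfl⟩
    simp only at this
    nlinarith

end EDot

lemma mean_quadratic_eq {ι : Type*} [Fintype ι] [Nonempty ι] (x : ι → ℝ) (a b c : ℝ) :
    (Fintype.card ι : ℝ)⁻¹ * ∑ i, (a * x i ^ 2 + b * x i + c)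
      = a * ((Fintype.card ι : ℝ)⁻¹ * ∑ i, (x i - (Fintype.card ι : ℝ)⁻¹ * ∑ j, x j) ^ 2
          + ((Fintype.card ι : ℝ)⁻¹ * ∑ j, x j) ^ 2)
        + b * ((Fintype.card ι : ℝ)⁻¹ * ∑ j, x j) + c := by
  have hN : (Fintype.card ι : ℝ) ≠ 0 := by positivity
  simp only [sub_sq, sum_add_distrib, sum_sub_distrib, ← mul_sum, ← sum_mul, sum_const,
    card_univ, nsmul_eq_mul]
  field_simp
  ring

lemma isGLB_image_mul_sq_sub_mul_sq_div {a b : ℝ} (ha : 0 ≤ a) (hb : 0 ≤ b) :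
    IsGLB ((fun m => m * b ^ 2 - m * a ^ 2 / (1 + m)) '' Ici 0) (-(max (a - b) 0) ^ 2) := by
  refine ⟨?_, fun c hc => ?_⟩
  · rintro _ ⟨m, hm : 0 ≤ m, rfl⟩
    have h1m : 0 < 1 + m := by linarith
    rcases le_total a b with hab | hab
    · rw [max_eq_right (by linarith)]
      have : m * a ^ 2 / (1 + m) ≤ m * b ^ 2 := by
        rw [div_le_iff₀ h1m]
        nlinarith [mul_le_mul_of_nonneg_left (pow_le_pow_left₀ ha hab 2) hm,
          mul_nonneg (mul_nonneg hm hm) (sq_nonneg b)]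
      linarith
    · rw [max_eq_left (by linarith)]
      have : m * a ^ 2 / (1 + m) ≤ m * b ^ 2 + (a - b) ^ 2 := by
        rw [div_le_iff₀ h1m]
        nlinarith [sq_nonneg (m * b - (a - b))]
      linarith
  have hval : ∀ m, 0 ≤ m → c ≤ m * b ^ 2 - m * a ^ 2 / (1 + m) :=
    fun m hm => hc ⟨m, hm, rfl⟩
  rcases le_total a b with hab | hab
  · simpa [max_eq_right (sub_nonpos.mpr hab)] using hval 0 le_rfl
  rw [max_eq_left (sub_nonneg.mpr hab)]
  rcases hb.eq_or_lt with rfl | hb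
  · refine le_of_forall_pos_le_add fun ε hε => ?_
    have h := hval (a ^ 2 / ε) (by positivity)
    have h1m : 0 < 1 + a ^ 2 / ε := by positivity
    have : a ^ 2 - ε ≤ a ^ 2 / ε * a ^ 2 / (1 + a ^ 2 / ε) := by
      rw [le_div_iff₀ h1m]
      field_simp
      nlinarith [sq_nonneg ε]
    linarith
  · have h := hval (a / b - 1) (by rw [sub_nonneg, le_div_iff₀ hb]; linarith)
    have : (a / b - 1) * b ^ 2 - (a / b - 1) * a ^ 2 / (1 + (a / b - 1)) = -(a - b) ^ 2 := by
      field_simp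
      ring
    linarith

theorem stmt_8_general {n N : ℕ} (hN : 0 < N) (s : Fin N → (Fin n → ℝ))
    (φ : Fin n → ℝ) (hφ : φ ≠ 0) (δ : ℝ) (α : ℝ) :
    let sbar : Fin n → ℝ := fun j => (N : ℝ)⁻¹ * ∑ i, s i j
    let μbar : ℝ := eDot φ sbar
    let C : ℝ := α - μbar
    let V : ℝ := (N : ℝ)⁻¹ * ∑ i, (eDot φ (s i) - μbar) ^ 2
    let nsq : ℝ := ∑ i, φ i ^ 2
    let Φ : ℝ → ℝ → (Fin n → ℝ) → ℝ := fun l₁ l₂ r =>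
      sSup { y | ∃ u : Fin n → ℝ,
        y = -(eDot φ u) ^ 2 - l₁ * (∑ i, (u i - r i) ^ 2) - l₂ * eDot φ u }
    C ^ 2 ≤ δ * nsq →
    sInf { y | ∃ l₁ l₂ : ℝ, 0 ≤ l₁ ∧
        y = l₁ * δ + l₂ * α + (N : ℝ)⁻¹ * ∑ i, Φ l₁ l₂ (s i) }
      = -α ^ 2 - (max (Real.sqrt V - Real.sqrt (δ * nsq - C ^ 2)) 0) ^ 2 := by
  intro sbar μbar C V nsq Φ hC
  have hns : 0 < nsq := by
    obtain ⟨j, hj⟩ := Function.ne_iff.mp hφ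
    exact sum_pos' (fun i _ => sq_nonneg _) ⟨j, mem_univ j, sq_pos_of_ne_zero hj⟩
  have hμ : μbar = (N : ℝ)⁻¹ * ∑ i, eDot φ (s i) := eDot_const_mul_sum φ _ s
  have hobj : ∀ m, 0 ≤ m → ∀ l₂,
      m * nsq * δ + l₂ * α + (N : ℝ)⁻¹ * ∑ i, Φ (m * nsq) l₂ (s i)
        = -α ^ 2 + (m * √(δ * nsq - C ^ 2) ^ 2 - m * √V ^ 2 / (1 + m))
          + (l₂ - (2 * m * μbar - 2 * (1 + m) * α)) ^ 2 / (4 * (1 + m)) := by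
    intro m hm l₂
    have h1m : 0 < 1 + m := by linarith
    have hΦ : ∀ i, Φ (m * nsq) l₂ (s i) = -(m / (1 + m)) * eDot φ (s i) ^ 2
        + -(m * l₂ / (1 + m)) * eDot φ (s i) + l₂ ^ 2 / (4 * (1 + m)) := fun i => by
      simp only [Φ]
      rw [(isGreatest_neg_sq_eDot_sub_penalty φ hns hm l₂ (s i)).csSup_eq]
      field_simp
      ring
    have : Nonempty (Fin N) := ⟨⟨0, hN⟩⟩
    have hmean := mean_quadratic_eq (fun i => eDot φ (s i)) (-(m / (1 + m)))
      (-(m * l₂ / (1 + m))) (l₂ ^ 2 / (4 * (1 + m)))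
    simp only [Fintype.card_fin] at hmean
    rw [Real.sq_sqrt (by linarith), Real.sq_sqrt (by positivity)]
    simp only [hΦ, hmean, V, C, ← hμ]
    field_simp
    ring
  have hglb := isGLB_image_mul_sq_sub_mul_sq_div (Real.sqrt_nonneg V)
    (Real.sqrt_nonneg (δ * nsq - C ^ 2))
  refine IsGLB.csInf_eq ⟨?_, fun c hc => ?_⟩ ⟨_, 0, 0, le_rfl, rfl⟩
  · rintro _ ⟨l₁, l₂, hl₁, rfl⟩
    have hm : 0 ≤ l₁ / nsq := div_nonneg hl₁ hns.le
    have hval := hobj (l₁ / nsq) hm l₂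
    rw [div_mul_cancel₀ _ hns.ne'] at hval
    have hinf := hglb.1 ⟨_, hm, rfl⟩
    have : 0 ≤ (l₂ - (2 * (l₁ / nsq) * μbar - 2 * (1 + l₁ / nsq) * α)) ^ 2
      / (4 * (1 + l₁ / nsq)) := by positivity
    linarith
  · have : c + α ^ 2 ≤ _ := hglb.2 <| forall_mem_image.2 fun m (hm : 0 ≤ m) => by
      have hval := hc ⟨m * nsq, 2 * m * μbar - 2 * (1 + m) * α, by positivity, rfl⟩
      rw [hobj m hm, sub_self, zero_pow two_ne_zero, zero_div, add_zero] at hval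
      linarith
    linarith

/-- **Dual value identity for the best case.**
With `s̄` the sample mean, `V = φᵀΣφ` the empirical variance, `C = α − φ·s̄`
satisfying `C² ≤ δ‖φ‖₂²`, and
`Φ_{λ₁,λ₂}(r) = sup_u [ −(φ·u)² − λ₁‖u − r‖₂² − λ₂(φ·u) ]`, the dual value
`inf_{λ₁ ≥ 0, λ₂} [ λ₁δ + λ₂α + (1/N)·Σᵢ Φ_{λ₁,λ₂}(sᵢ) ]` equals
`−α² − max(√(φᵀΣφ) − √(δ‖φ‖₂² − C²), 0)²`. -/
theorem stmt_8 {n N : ℕ} (hN : 0 < N) (s : Fin N → (Fin n → ℝ))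
    (φ : Fin n → ℝ) (hφ : φ ≠ 0) (δ : ℝ) (hδ : 0 < δ) (α : ℝ) :
    let sbar : Fin n → ℝ := fun j => (N : ℝ)⁻¹ * ∑ i, s i j
    let μbar : ℝ := eDot φ sbar
    let C : ℝ := α - μbar
    let V : ℝ := (N : ℝ)⁻¹ * ∑ i, (eDot φ (s i) - μbar) ^ 2
    let nsq : ℝ := ∑ i, φ i ^ 2
    let Φ : ℝ → ℝ → (Fin n → ℝ) → ℝ := fun l₁ l₂ r =>
      sSup { y | ∃ u : Fin n → ℝ,
        y = -(eDot φ u) ^ 2 - l₁ * (∑ i, (u i - r i) ^ 2) - l₂ * eDot φ u }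
    C ^ 2 ≤ δ * nsq →
    sInf { y | ∃ l₁ l₂ : ℝ, 0 ≤ l₁ ∧
        y = l₁ * δ + l₂ * α + (N : ℝ)⁻¹ * ∑ i, Φ l₁ l₂ (s i) }
      = -α ^ 2 - (max (Real.sqrt V - Real.sqrt (δ * nsq - C ^ 2)) 0) ^ 2 :=
  stmt_8_general hN s φ hφ δ α
end

section
/- Feasibility of the moment-constrained Wasserstein ball: Let s₁, …, s_N ∈ ℝⁿ with empirical measure Q_N and sample mean s̄, let φ ∈ ℝⁿ with φ ≠ 0, let δ > 0, and let α ∈ ℝ satisfy (α − φ·s̄)² ≤ δ·‖φ‖₂². Then there exists a Borel probability measure Q on ℝⁿ with D_c(Q, Q_N) ≤ δ and E^Q[φ·S] = α. -/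
open MeasureTheory
open scoped ENNReal BigOperators

/-- Transport cost of a coupling `π` for the quadratic cost `c(u,v) = ‖u − v‖₂²`. -/
noncomputable def transportCost {n : ℕ}
    (π : Measure ((Fin n → ℝ) × (Fin n → ℝ))) : ℝ≥0∞ :=
  ∫⁻ p, ENNReal.ofReal (∑ i, (p.1 i - p.2 i) ^ 2) ∂π

/-- Optimal transport cost `D_c(Q, Q')` with quadratic cost `c(u,v) = ‖u − v‖₂²`. -/
noncomputable def otCost {n : ℕ} (Q Q' : Measure (Fin n → ℝ)) : ℝ≥0∞ :=
  sInf { r | ∃ π : Measure ((Fin n → ℝ) × (Fin n → ℝ)),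
      IsProbabilityMeasure π ∧ π.map Prod.fst = Q ∧ π.map Prod.snd = Q' ∧
      r = transportCost π }

/-- Empirical measure `Q_N = (1/N)·Σᵢ δ_{sᵢ}` of the sample points `s₁, …, s_N`. -/
noncomputable def empiricalMeasure {n N : ℕ} (s : Fin N → (Fin n → ℝ)) :
    Measure (Fin n → ℝ) :=
  (N : ℝ≥0∞)⁻¹ • ∑ i, Measure.dirac (s i)

/-! Translating every sample point by the same vector `v` moves the mean of the linear
functional `x ↦ φ·x` by `φ·v`, and the coupling `x ↦ (x + v, x)` shows that this translation
costs at most `‖v‖²`. Taking `v = t φ` with `t = (α − φ·s̄)/‖φ‖²` hits the moment `α` exactly at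
cost `(α − φ·s̄)²/‖φ‖² ≤ δ`. -/

lemma continuous_eDot {n : ℕ} (a : Fin n → ℝ) : Continuous (eDot a) := by
  unfold eDot; fun_prop

lemma eDot_add_right {n : ℕ} (a b c : Fin n → ℝ) : eDot a (b + c) = eDot a b + eDot a c := by
  simp only [eDot, Pi.add_apply, mul_add, Finset.sum_add_distrib]

lemma eDot_smul_self {n : ℕ} (t : ℝ) (a : Fin n → ℝ) : eDot a (t • a) = t * ∑ i, a i ^ 2 := by
  simp only [eDot, Pi.smul_apply, smul_eq_mul, Finset.mul_sum]
  exact Finset.sum_congr rfl fun i _ => by ring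

lemma eDot_mean {n N : ℕ} (a : Fin n → ℝ) (s : Fin N → Fin n → ℝ) :
    eDot a (fun j => (N : ℝ)⁻¹ * ∑ i, s i j) = (N : ℝ)⁻¹ * ∑ i, eDot a (s i) := by
  simp only [eDot, Finset.mul_sum]
  rw [Finset.sum_comm]
  exact Finset.sum_congr rfl fun i _ => Finset.sum_congr rfl fun j _ => by ring

lemma transportCost_map_prod_mk {n : ℕ} (Q : Measure (Fin n → ℝ)) [IsProbabilityMeasure Q]
    (v : Fin n → ℝ) :
    transportCost (Q.map fun x => (x + v, x)) = ENNReal.ofReal (∑ i, v i ^ 2) := by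
  rw [transportCost, lintegral_map (by fun_prop) (by fun_prop)]
  simp

lemma otCost_map_add_le {n : ℕ} (Q : Measure (Fin n → ℝ)) [IsProbabilityMeasure Q]
    (v : Fin n → ℝ) : otCost (Q.map (· + v)) Q ≤ ENNReal.ofReal (∑ i, v i ^ 2) := by
  refine sInf_le ⟨Q.map fun x => (x + v, x), Measure.isProbabilityMeasure_map (by fun_prop),
    ?_, ?_, (transportCost_map_prod_mk Q v).symm⟩
  · rw [Measure.map_map (by fun_prop) (by fun_prop)]; rfl
  · rw [Measure.map_map (by fun_prop) (by fun_prop)]; exact Measure.map_id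

lemma isProbabilityMeasure_empiricalMeasure {n N : ℕ} (hN : 0 < N) (s : Fin N → Fin n → ℝ) :
    IsProbabilityMeasure (empiricalMeasure s) := by
  constructor
  simp [empiricalMeasure,
    ENNReal.inv_mul_cancel (Nat.cast_ne_zero.2 hN.ne') (ENNReal.natCast_ne_top N)]

lemma integrable_empiricalMeasure {n N : ℕ} {E : Type*} [NormedAddCommGroup E] (hN : 0 < N)
    (s : Fin N → Fin n → ℝ) (f : (Fin n → ℝ) → E) : Integrable f (empiricalMeasure s) :=
  (integrable_finsetSum_measure.2 fun _ _ => integrable_dirac enorm_lt_top).smul_measure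
    (ENNReal.inv_ne_top.2 <| Nat.cast_ne_zero.2 hN.ne')

lemma integral_empiricalMeasure {n N : ℕ} {E : Type*} [NormedAddCommGroup E] [NormedSpace ℝ E]
    [CompleteSpace E] (s : Fin N → Fin n → ℝ) (f : (Fin n → ℝ) → E) :
    ∫ x, f x ∂empiricalMeasure s = (N : ℝ)⁻¹ • ∑ i, f (s i) := by
  rw [empiricalMeasure, integral_smul_measure,
    integral_finsetSum_measure fun _ _ => integrable_dirac enorm_lt_top]
  simp

theorem stmt_14_general {n N : ℕ} (hN : 0 < N) (s : Fin N → (Fin n → ℝ))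
    (φ : Fin n → ℝ) (hφ : φ ≠ 0) (δ : ℝ) (α : ℝ) :
    let sbar : Fin n → ℝ := fun j => (N : ℝ)⁻¹ * ∑ i, s i j
    let nsq : ℝ := ∑ i, φ i ^ 2
    (α - eDot φ sbar) ^ 2 ≤ δ * nsq →
    ∃ Q : Measure (Fin n → ℝ), IsProbabilityMeasure Q ∧
      otCost Q (empiricalMeasure s) ≤ ENNReal.ofReal δ ∧
      Integrable (fun x => eDot φ x) Q ∧ (∫ x, eDot φ x ∂Q) = α := by
  intro sbar nsq hα
  have hnsq : 0 < nsq := by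
    obtain ⟨j, hj⟩ := Function.ne_iff.mp hφ
    exact Finset.sum_pos' (fun i _ => sq_nonneg _) ⟨j, Finset.mem_univ j, sq_pos_of_ne_zero hj⟩
  have := isProbabilityMeasure_empiricalMeasure hN s
  set t := (α - eDot φ sbar) / nsq
  have ht : t * nsq = α - eDot φ sbar := div_mul_cancel₀ _ hnsq.ne'
  have hshift : Measurable (· + t • φ) := by fun_prop
  refine ⟨(empiricalMeasure s).map (· + t • φ), Measure.isProbabilityMeasure_map
    hshift.aemeasurable, ?_, ?_, ?_⟩
  · refine (otCost_map_add_le _ _).trans (ENNReal.ofReal_le_ofReal ?_)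
    calc ∑ i, (t • φ) i ^ 2 = t * (t * nsq) := by
          simp only [nsq, Pi.smul_apply, smul_eq_mul, Finset.mul_sum]
          exact Finset.sum_congr rfl fun i _ => by ring
      _ = (α - eDot φ sbar) ^ 2 / nsq := by rw [ht]; ring
      _ ≤ δ := (div_le_iff₀ hnsq).2 hα
  · exact (integrable_map_measure (continuous_eDot φ).aestronglyMeasurable
      hshift.aemeasurable).2 (integrable_empiricalMeasure hN s _)
  · calc ∫ x, eDot φ x ∂(empiricalMeasure s).map (· + t • φ)
          = ∫ x, eDot φ (x + t • φ) ∂empiricalMeasure s :=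
            integral_map hshift.aemeasurable (continuous_eDot φ).aestronglyMeasurable
      _ = (N : ℝ)⁻¹ * ∑ i, eDot φ (s i + t • φ) := integral_empiricalMeasure s _
      _ = eDot φ sbar + t * nsq := by
            simp only [eDot_add_right, eDot_smul_self, Finset.sum_add_distrib, Finset.sum_const,
              Finset.card_univ, Fintype.card_fin, nsmul_eq_mul, sbar, eDot_mean]
            field_simp
            rfl
      _ = α := by rw [ht]; ring

/-- **Feasibility of the moment-constrained Wasserstein ball.**
For sample points `s₁, …, s_N` with empirical measure `Q_N` and sample mean
`s̄`, `φ ≠ 0`, `δ > 0`, and `α` with `(α − φ·s̄)² ≤ δ‖φ‖₂²`, there is a Borel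
probability measure `Q` with `D_c(Q, Q_N) ≤ δ` and `E^Q[φ·S] = α`. -/
theorem stmt_14 {n N : ℕ} (hN : 0 < N) (s : Fin N → (Fin n → ℝ))
    (φ : Fin n → ℝ) (hφ : φ ≠ 0) (δ : ℝ) (hδ : 0 < δ) (α : ℝ) :
    let sbar : Fin n → ℝ := fun j => (N : ℝ)⁻¹ * ∑ i, s i j
    let nsq : ℝ := ∑ i, φ i ^ 2
    (α - eDot φ sbar) ^ 2 ≤ δ * nsq →
    ∃ Q : Measure (Fin n → ℝ), IsProbabilityMeasure Q ∧
      otCost Q (empiricalMeasure s) ≤ ENNReal.ofReal δ ∧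
      Integrable (fun x => eDot φ x) Q ∧ (∫ x, eDot φ x ∂Q) = α :=
  stmt_14_general hN s φ hφ δ α
end
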